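/- Let A be a 3-edge-connected component of a finite multigraph G. Then every connected component Z of G - A has at most two edges of G joining it to A. -/

import Mathlib

namespace TCW

/-- A multigraph: a type of vertices, a type of edges, and an incidence map
assigning to each edge its (unordered) pair of endpoints. -/
structure Multigraph (V E : Type) where
  inc : E → Sym2 V

namespace Multigraph

variable {V E : Type}

/-- The multigraph has no loops. -/
def Loopless (G : Multigraph V E) : Prop := ∀ e : E, ¬ (G.inc e).IsDiag

/-- Walks in a multigraph. -/
inductive Walk (G : Multigraph V E) : V → V → Type where
  | nil (v : V) : Walk G v v
  | cons {u v w : V} (e : E) (he : G.inc e = s(u, v)) (tail : Walk G v w) : Walk G u w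

namespace Walk

variable {G : Multigraph V E}

/-- The list of edges traversed by a walk. -/
def edges : ∀ {u v : V}, G.Walk u v → List E
  | _, _, .nil _ => []
  | _, _, .cons e _ p => e :: p.edges

/-- The list of vertices visited by a walk (in order). -/
def support : ∀ {u v : V}, G.Walk u v → List V
  | u, _, .nil _ => [u]
  | u, _, .cons _ _ p => u :: p.support

/-- A walk is a path if it visits no vertex twice. -/
def IsPath {u v : V} (p : G.Walk u v) : Prop := p.support.Nodup

/-- A closed walk is a cycle if it is nonempty, repeats no edge, and its
vertices are pairwise distinct except for the common endpoint. -/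
def IsCycle {u : V} (p : G.Walk u u) : Prop :=
  p.edges ≠ [] ∧ p.edges.Nodup ∧ p.support.tail.Nodup

end Walk

/-- Two walks are edge-disjoint if they share no edge. -/
def EdgeDisjoint {G : Multigraph V E} {u v u' v' : V}
    (p : G.Walk u v) (q : G.Walk u' v') : Prop :=
  ∀ e : E, e ∈ p.edges → e ∉ q.edges

/-- There exist three pairwise edge-disjoint paths from `u` to `v`. -/
def ThreePaths (G : Multigraph V E) (u v : V) : Prop :=
  ∃ (p₁ p₂ p₃ : G.Walk u v), p₁.IsPath ∧ p₂.IsPath ∧ p₃.IsPath ∧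
    EdgeDisjoint p₁ p₂ ∧ EdgeDisjoint p₁ p₃ ∧ EdgeDisjoint p₂ p₃

/-- `u` and `v` are 3-edge-connected: they are equal or joined by three
pairwise edge-disjoint paths. -/
def ThreeEC (G : Multigraph V E) (u v : V) : Prop := u = v ∨ ThreePaths G u v

/-- The set of edges crossing the vertex set `A` (i.e. the cut `δ(A)`). -/
def delta (G : Multigraph V E) (A : Set V) : Set E :=
  {e | ∃ x y, G.inc e = s(x, y) ∧ x ∈ A ∧ y ∉ A}

/-- The edge sets of cycles of `G`. -/
def cycleSets (G : Multigraph V E) : Set (Set E) :=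
  {C | ∃ (u : V) (p : G.Walk u u), p.IsCycle ∧ C = {e | e ∈ p.edges}}

/-- A cactus: any two distinct cycles are edge-disjoint (equivalently, every
2-connected block is a single edge or a cycle). -/
def IsCactus (G : Multigraph V E) : Prop :=
  ∀ C₁ ∈ G.cycleSets, ∀ C₂ ∈ G.cycleSets, C₁ ≠ C₂ → C₁ ∩ C₂ = ∅

/-- The quotient multigraph of `G` by a setoid on vertices: vertices are the
equivalence classes, and every edge of `G` whose endpoints lie in different
classes gives one edge; edges inside a class are discarded. -/
def quot (G : Multigraph V E) (s : Setoid V) :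
    Multigraph (Quotient s) {e : E // ¬ (Sym2.map (Quotient.mk s) (G.inc e)).IsDiag} :=
  ⟨fun e => Sym2.map (Quotient.mk s) (G.inc e.1)⟩

/-- The setoid of 3-edge-connectedness (its classes are the
3-edge-connected components). -/
def tccSetoid (G : Multigraph V E) : Setoid V := Relation.EqvGen.setoid (ThreeEC G)

/-- `H` is an immersion of `G`: vertices of `H` map injectively to vertices
of `G`, and edges of `H` map to pairwise edge-disjoint paths of `G`, the path
of an edge connecting the images of its endpoints. -/
def IsImmersion {V₁ E₁ V₂ E₂ : Type} (H : Multigraph V₁ E₁) (G : Multigraph V₂ E₂) : Prop :=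
  ∃ (f : V₁ → V₂) (P : E₁ → (u : V₂) × (v : V₂) × G.Walk u v),
    Function.Injective f ∧
    (∀ e : E₁, Sym2.map f (H.inc e) = s((P e).1, (P e).2.1)) ∧
    (∀ e : E₁, (P e).2.2.IsPath) ∧
    (∀ e₁ e₂ : E₁, e₁ ≠ e₂ → EdgeDisjoint (P e₁).2.2 (P e₂).2.2)

section Torso

variable (G : Multigraph V E) (A : Set V)

/-- Two vertices outside `A` are related if joined by a walk avoiding `A`. -/
def compRel (x y : {v : V // v ∉ A}) : Prop :=
  ∃ p : G.Walk x.1 y.1, ∀ w ∈ p.support, w ∉ A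

/-- The setoid whose classes are the connected components of `G - A`. -/
def compSetoid : Setoid {v : V // v ∉ A} := Relation.EqvGen.setoid (G.compRel A)

/-- The component `Z` of `G - A` is attached to the vertex `a ∈ A` by some edge. -/
def Attached (Z : Quotient (G.compSetoid A)) (a : {v : V // v ∈ A}) : Prop :=
  ∃ (e : E) (z : {v : V // v ∉ A}), Quotient.mk (G.compSetoid A) z = Z ∧ G.inc e = s(a.1, z.1)

/-- Edges of `G` with both endpoints in `A`, recorded together with their
endpoints as vertices of the torso. -/
def InnerE : Type :=
  {q : E × Sym2 {v : V // v ∈ A} // G.inc q.1 = Sym2.map Subtype.val q.2}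

/-- Replacement edges: one for each connected component of `G - A` having
exactly two (distinct) neighbours in `A`; its endpoints are those neighbours. -/
def RepE : Type :=
  {q : Quotient (G.compSetoid A) × Sym2 {v : V // v ∈ A} //
    ¬ q.2.IsDiag ∧ {a | a ∈ q.2} = {a | G.Attached A q.1 a}}

/-- The torso of `A` in `G`: keep the edges inside `A`, and for each
connected component of `G - A` with exactly two neighbours in `A`, add a
replacement edge between those neighbours. -/
def torso : Multigraph {v : V // v ∈ A} (G.InnerE A ⊕ G.RepE A) :=
  ⟨Sum.elim (fun q => q.1.2) (fun q => q.1.2)⟩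

end Torso

end Multigraph

open Multigraph

/-- A tree-cut decomposition of `G` with nodes `N`: a tree on `N` together
with a near-partition of the vertices of `G` into bags indexed by `N`. -/
structure TreeCutDecomp (G : Multigraph V E) (N : Type) where
  tree : SimpleGraph N
  isTree : tree.IsTree
  bag : N → Set V
  bag_disjoint : ∀ n₁ n₂ : N, n₁ ≠ n₂ → bag n₁ ∩ bag n₂ = ∅
  bag_covers : ∀ v : V, ∃ t : N, v ∈ bag t

namespace TreeCutDecomp

variable {V E N : Type} {G : Multigraph V E}

/-- The adhesion of the tree edge `n₁n₂`: all edges of `G` whose endpoints lie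
in bags of nodes in different components of the tree minus that edge. -/
def adhE (D : TreeCutDecomp G N) (n₁ n₂ : N) : Set E :=
  {e | ∃ (x y : V) (p q : N), G.inc e = s(x, y) ∧ x ∈ D.bag p ∧ y ∈ D.bag q ∧
    ¬ (D.tree.deleteEdges {s(n₁, n₂)}).Reachable p q}

/-- The adhesion of a node: the union of the adhesions of the bold
(adhesion of size at least 3) tree edges incident to it. -/
def adhN (D : TreeCutDecomp G N) (t : N) : Set E :=
  {e | ∃ n : N, D.tree.Adj n t ∧ 3 ≤ (D.adhE n t).ncard ∧ e ∈ D.adhE n t}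

/-- The decomposition has adhesion-width at most `a`. -/
def AdhWidthLE (D : TreeCutDecomp G N) (a : ℕ) : Prop := ∀ t : N, (D.adhN t).ncard ≤ a

/-- The decomposition has bag-width at most `b`. -/
def BagWidthLE (D : TreeCutDecomp G N) (b : ℕ) : Prop := ∀ t : N, (D.bag t).ncard ≤ b

/-- The adhesion-width: the maximum size of a node adhesion. -/
noncomputable def adhWidth [Fintype N] (D : TreeCutDecomp G N) : ℕ :=
  Finset.univ.sup fun t : N => (D.adhN t).ncard

/-- The bag-width: the maximum size of a bag. -/
noncomputable def bagWidth [Fintype N] (D : TreeCutDecomp G N) : ℕ :=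
  Finset.univ.sup fun t : N => (D.bag t).ncard

open Classical in
/-- GPRTW's width: the maximum over tree edges of the adhesion size, and over
nodes `t` of `|X_t|` plus the number of bold tree edges incident to `t`. -/
noncomputable def gprtwWidth [Fintype N] (D : TreeCutDecomp G N) : ℕ :=
  max
    (Finset.univ.sup fun p : N × N =>
      if D.tree.Adj p.1 p.2 then (D.adhE p.1 p.2).ncard else 0)
    (Finset.univ.sup fun t : N =>
      (D.bag t).ncard + {n : N | D.tree.Adj n t ∧ 3 ≤ (D.adhE n t).ncard}.ncard)

end TreeCutDecomp

/-- A slab in `G`: a connected subgraph (given by its vertex and edge sets)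
together with a nonempty core that is 3-edge-connected in `G`. -/
structure Slab (G : Multigraph V E) where
  verts : Set V
  edgeSet : Set E
  edge_mem : ∀ e ∈ edgeSet, ∀ x ∈ G.inc e, x ∈ verts
  conn : ∀ x ∈ verts, ∀ y ∈ verts, ∃ p : G.Walk x y,
    (∀ w ∈ p.support, w ∈ verts) ∧ (∀ e ∈ p.edges, e ∈ edgeSet)
  core : Set V
  core_sub : core ⊆ verts
  core_nonempty : core.Nonempty
  core_tec : ∀ x ∈ core, ∀ y ∈ core, ThreeEC G x y

/-- A set `F` of edges disconnects a slab if two core vertices lie in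
different components of the slab minus `F`. -/
def Slab.Disconnects {G : Multigraph V E} (F : Set E) (s : Slab G) : Prop :=
  ∃ x ∈ s.core, ∃ y ∈ s.core, ¬ ∃ p : G.Walk x y,
    (∀ w ∈ p.support, w ∈ s.verts) ∧ (∀ e ∈ p.edges, e ∈ s.edgeSet ∧ e ∉ F)

/-- A bramble: a family of pairwise touching slabs (cores pairwise intersect). -/
def IsBramble {G : Multigraph V E} (B : Set (Slab G)) : Prop :=
  ∀ s₁ ∈ B, ∀ s₂ ∈ B, (s₁.core ∩ s₂.core).Nonempty

/-- The bramble has adhesion-order at least `a`: every edge set disconnecting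
all its slabs has at least `a` edges. -/
def AdhOrderGE {G : Multigraph V E} (B : Set (Slab G)) (a : ℕ) : Prop :=
  ∀ F : Set E, (∀ s ∈ B, Slab.Disconnects F s) → a ≤ F.ncard

/-- The bramble has bag-order at least `b`: every core has at least `b` vertices. -/
def BagOrderGE {G : Multigraph V E} (B : Set (Slab G)) (b : ℕ) : Prop :=
  ∀ s ∈ B, b ≤ s.core.ncard

/-- An `(a,b)`-tangle: a consistent orientation of all edge separations of
order `< a` avoiding the collection `Σ_{a,b}` of small stars. An oriented
separation `(A, B)` is represented by its first side `A` (so `B = Aᶜ`). -/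
def IsTangle (G : Multigraph V E) (a b : ℕ) (L : Set (Set V)) : Prop :=
  (∀ A ∈ L, (G.delta A).ncard < a) ∧
  (∀ A : Set V, (G.delta A).ncard < a → (A ∈ L ↔ Aᶜ ∉ L)) ∧
  (∀ A ∈ L, ∀ C ∈ L, (Aᶜ ∩ Cᶜ).Nonempty) ∧
  (∀ σ : Set (Set V), σ ⊆ L → σ.Nonempty →
    (∀ A ∈ σ, ∀ C ∈ σ, A ≠ C → A ∩ C = ∅) →
    ¬ ((⋃ A ∈ {A ∈ σ | 3 ≤ (G.delta A).ncard}, G.delta A).ncard < a ∧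
       (⋂ A ∈ σ, Aᶜ).ncard < b))


/-!
Let `Z` be the component of `z` in `G - A` and suppose at least three edges leave `Z`. Call a
connected set `X ⊆ Z` with `|δ X| ≤ 2` a fence in `Z`. Uncrossing a maximal fence with any other
one (submodularity and posimodularity of `|δ|`) and inducting on `|Z|` shows that some `w ∈ Z`
lies in no fence. If `X` separates `v ∈ A` from `w` with `|δ X| ≤ 2`, the component of `w` outside
`X` misses `A`, since every vertex of `A` is joined to `v` by three edge-disjoint paths; so it is
a fence around `w`. Hence every `v`–`w` cut has at least three edges, and Menger's theorem (proved
here with unit-capacity flows and augmenting paths) puts `w` into `A`, a contradiction.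
-/

lemma Set.ncard_add_ncard_le_of_subset {α : Type} [Finite α] {s t u w : Set α}
    (hunion : s ∪ t ⊆ u ∪ w) (hinter : s ∩ t ⊆ u ∩ w) :
    s.ncard + t.ncard ≤ u.ncard + w.ncard := by
  rw [← Set.ncard_union_add_ncard_inter s t, ← Set.ncard_union_add_ncard_inter u w]
  exact add_le_add (Set.ncard_le_ncard hunion) (Set.ncard_le_ncard hinter)

namespace Multigraph

variable {V E : Type} {G : Multigraph V E}

namespace Walk

def append : ∀ {u v w : V}, G.Walk u v → G.Walk v w → G.Walk u w
  | _, _, _, .nil _, q => q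
  | _, _, _, .cons e he p, q => .cons e he (p.append q)

def reverse : ∀ {u v : V}, G.Walk u v → G.Walk v u
  | _, _, .nil v => .nil v
  | _, _, .cons e he p => p.reverse.append (.cons e (he.trans Sym2.eq_swap) (.nil _))

@[simp]
lemma start_mem_support {u v : V} (p : G.Walk u v) : u ∈ p.support := by
  cases p <;> simp [support]

@[simp]
lemma end_mem_support : ∀ {u v : V} (p : G.Walk u v), v ∈ p.support
  | _, _, .nil _ => by simp [support]
  | _, _, .cons _ _ p => List.mem_cons_of_mem _ p.end_mem_support

@[simp]
lemma edges_append : ∀ {u v w : V} (p : G.Walk u v) (q : G.Walk v w),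
    (p.append q).edges = p.edges ++ q.edges
  | _, _, _, .nil _, _ => rfl
  | _, _, _, .cons _ _ p, q => by simp [append, edges, p.edges_append q]

@[simp]
lemma mem_support_append {u v w x : V} : ∀ (p : G.Walk u v) (q : G.Walk v w),
    x ∈ (p.append q).support ↔ x ∈ p.support ∨ x ∈ q.support
  | .nil _, q => by simp [append, support]; rintro rfl; exact q.start_mem_support
  | .cons _ _ p, q => by simp [append, support, mem_support_append p q, or_assoc]

@[simp]
lemma edges_reverse : ∀ {u v : V} (p : G.Walk u v), p.reverse.edges = p.edges.reverse
  | _, _, .nil _ => rfl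
  | _, _, .cons _ _ p => by simp [reverse, edges, p.edges_reverse]

@[simp]
lemma mem_support_reverse {x : V} : ∀ {u v : V} (p : G.Walk u v),
    x ∈ p.reverse.support ↔ x ∈ p.support
  | _, _, .nil _ => Iff.rfl
  | _, _, .cons _ _ p => by
    simp only [reverse, mem_support_append, mem_support_reverse p, support, List.mem_cons]
    have := p.start_mem_support
    constructor
    · rintro (h | rfl | h | h)
      exacts [.inr h, .inr this, .inl h, absurd h List.not_mem_nil]
    · rintro (h | h)
      exacts [.inr (.inr (.inl h)), .inl h]

lemma exists_step_exit {T : Set V} : ∀ {u v : V} (p : G.Walk u v), u ∈ T → v ∉ T →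
    ∃ e a b, G.inc e = s(a, b) ∧ e ∈ p.edges ∧ b ∈ p.support ∧ a ∈ T ∧ b ∉ T
  | _, _, .nil _, hu, hv => absurd hu hv
  | _, _, .cons (v := c) e he p, hu, hv => by
    by_cases hc : c ∈ T
    · obtain ⟨e', a, b, hab, he', hb, haT, hbT⟩ := p.exists_step_exit hc hv
      exact ⟨e', a, b, hab, List.mem_cons_of_mem _ he', List.mem_cons_of_mem _ hb, haT, hbT⟩
    · exact ⟨e, _, c, he, List.mem_cons_self, List.mem_cons_of_mem _ p.start_mem_support,
        hu, hc⟩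

lemma exists_prefix {x : V} : ∀ {u v : V} (p : G.Walk u v), x ∈ p.support →
    ∃ q : G.Walk u x, ∀ y ∈ q.support, y ∈ p.support
  | _, _, .nil _, hx => by
    obtain rfl : x = _ := List.mem_singleton.mp hx
    exact ⟨.nil _, fun y hy => hy⟩
  | _, _, .cons e he p, hx => by
    rcases List.mem_cons.mp hx with rfl | hx
    · exact ⟨.nil _, fun y hy => by simp_all [support]⟩
    · obtain ⟨q, hq⟩ := p.exists_prefix hx
      refine ⟨.cons e he q, fun y hy => ?_⟩
      rcases List.mem_cons.mp hy with rfl | hy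
      exacts [List.mem_cons_self, List.mem_cons_of_mem _ (hq y hy)]

lemma mem_support_of_mem_edges {e : E} {a b : V} (he : G.inc e = s(a, b)) :
    ∀ {u v : V} (p : G.Walk u v), e ∈ p.edges → a ∈ p.support
  | _, _, .nil _, h => absurd h List.not_mem_nil
  | _, _, .cons e' he' p, h => by
    rcases List.mem_cons.mp h with rfl | h
    · rcases Sym2.eq_iff.mp (he.symm.trans he') with ⟨rfl, -⟩ | ⟨rfl, -⟩
      exacts [List.mem_cons_self, List.mem_cons_of_mem _ p.start_mem_support]
    · exact List.mem_cons_of_mem _ (mem_support_of_mem_edges he p h)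

lemma IsPath.edges_nodup : ∀ {u v : V} {p : G.Walk u v}, p.IsPath → p.edges.Nodup
  | _, _, .nil _, _ => List.nodup_nil
  | _, _, .cons e he p, hp => by
    rw [IsPath, support, List.nodup_cons] at hp
    exact List.nodup_cons.mpr
      ⟨fun h => hp.1 (mem_support_of_mem_edges he p h), IsPath.edges_nodup hp.2⟩

section AllSteps

variable {Q : V → V → E → Prop}

def AllSteps (Q : V → V → E → Prop) : ∀ {u v : V}, G.Walk u v → Prop
  | _, _, .nil _ => True
  | _, _, .cons (u := a) (v := b) e _ p => Q a b e ∧ p.AllSteps Q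

lemma AllSteps.append : ∀ {u v w : V} {p : G.Walk u v} {q : G.Walk v w},
    p.AllSteps Q → q.AllSteps Q → (p.append q).AllSteps Q
  | _, _, _, .nil _, _, _, hq => hq
  | _, _, _, .cons _ _ _, _, hp, hq => ⟨hp.1, hp.2.append hq⟩

lemma AllSteps.reverse : ∀ {u v : V} {p : G.Walk u v},
    p.AllSteps Q → p.reverse.AllSteps fun a b e => Q b a e
  | _, _, .nil _, _ => trivial
  | _, _, .cons _ _ _, hp => hp.2.reverse.append ⟨hp.1, trivial⟩

lemma AllSteps.snoc {u v w : V} {p : G.Walk u v} (hp : p.AllSteps Q) {e : E}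
    (he : G.inc e = s(v, w)) (hQ : Q v w e) : ∃ q : G.Walk u w, q.AllSteps Q :=
  ⟨p.append (.cons e he (.nil w)), hp.append ⟨hQ, trivial⟩⟩

lemma AllSteps.exists_of_mem_edges {e : E} : ∀ {u v : V} {p : G.Walk u v},
    p.AllSteps Q → e ∈ p.edges → ∃ a b, Q a b e
  | _, _, .nil _, _, he => absurd he List.not_mem_nil
  | _, _, .cons _ _ _, hp, he => (List.mem_cons.mp he).elim (fun h => h ▸ ⟨_, _, hp.1⟩)
      (hp.2.exists_of_mem_edges)

lemma AllSteps.mono {Q' : V → V → E → Prop} : ∀ {u v : V} {p : G.Walk u v},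
    (∀ a b e, e ∈ p.edges → Q a b e → Q' a b e) → p.AllSteps Q → p.AllSteps Q'
  | _, _, .nil _, _, _ => trivial
  | _, _, .cons _ _ _, h, hp =>
    ⟨h _ _ _ List.mem_cons_self hp.1,
      hp.2.mono fun a b e he => h a b e (List.mem_cons_of_mem _ he)⟩

lemma exists_suffix {x : V} : ∀ {u v : V} (p : G.Walk u v), p.AllSteps Q → x ∈ p.support →
    ∃ q : G.Walk x v, q.support.Sublist p.support ∧ (∀ e ∈ q.edges, e ∈ p.edges) ∧
      q.AllSteps Q
  | _, _, .nil _, _, hx => by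
    obtain rfl : x = _ := List.mem_singleton.mp hx
    exact ⟨.nil _, List.Sublist.refl _, fun _ h => h, trivial⟩
  | _, _, .cons e he p, hp, hx => by
    rcases List.mem_cons.mp hx with rfl | hx
    · exact ⟨.cons e he p, List.Sublist.refl _, fun _ h => h, hp⟩
    · obtain ⟨q, hsub, hedges, hq⟩ := p.exists_suffix hp.2 hx
      exact ⟨q, hsub.trans (List.sublist_cons_self _ _),
        fun e' he' => List.mem_cons_of_mem _ (hedges e' he'), hq⟩

lemma exists_isPath : ∀ {u v : V} (p : G.Walk u v), p.AllSteps Q →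
    ∃ q : G.Walk u v, q.IsPath ∧ q.AllSteps Q ∧ ∀ e ∈ q.edges, e ∈ p.edges
  | _, _, .nil w, _ => ⟨.nil w, List.nodup_singleton w, trivial, fun _ h => h⟩
  | _, _, .cons (u := a) e he p, hp => by
    obtain ⟨q, hq, hqQ, hqp⟩ := p.exists_isPath hp.2
    by_cases ha : a ∈ q.support
    · obtain ⟨r, hsub, hrq, hr⟩ := q.exists_suffix hqQ ha
      exact ⟨r, hsub.nodup hq, hr, fun e' he' => List.mem_cons_of_mem _ (hqp e' (hrq e' he'))⟩
    · refine ⟨.cons e he q, List.nodup_cons.mpr ⟨ha, hq⟩, ⟨hp.1, hqQ⟩, fun e' he' => ?_⟩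
      rcases List.mem_cons.mp he' with rfl | he'
      exacts [List.mem_cons_self, List.mem_cons_of_mem _ (hqp e' he')]

end AllSteps

end Walk

section Connectivity

def ReachableIn (G : Multigraph V E) (S : Set V) (x y : V) : Prop :=
  ∃ p : G.Walk x y, ∀ w ∈ p.support, w ∈ S

/-- The component of `t` in the subgraph induced on `S` (empty if `t ∉ S`). -/
def compIn (G : Multigraph V E) (S : Set V) (t : V) : Set V := {y | G.ReachableIn S t y}

def ConnectedOn (G : Multigraph V E) (S : Set V) : Prop :=
  S.Nonempty ∧ ∀ x ∈ S, ∀ y ∈ S, G.ReachableIn S x y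

variable {S T : Set V} {x y z : V}

namespace ReachableIn

lemma refl (hx : x ∈ S) : G.ReachableIn S x x :=
  ⟨.nil x, fun _ hw => List.mem_singleton.mp hw ▸ hx⟩

lemma mem_right : G.ReachableIn S x y → y ∈ S
  | ⟨p, hp⟩ => hp y p.end_mem_support

lemma mono (hST : S ⊆ T) : G.ReachableIn S x y → G.ReachableIn T x y
  | ⟨p, hp⟩ => ⟨p, fun w hw => hST (hp w hw)⟩

lemma trans (h₁ : G.ReachableIn S x y) (h₂ : G.ReachableIn S y z) : G.ReachableIn S x z := by
  obtain ⟨p, hp⟩ := h₁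
  obtain ⟨q, hq⟩ := h₂
  exact ⟨p.append q, fun w hw => (Walk.mem_support_append p q).mp hw |>.elim (hp w) (hq w)⟩

lemma symm (h : G.ReachableIn S x y) : G.ReachableIn S y x := by
  obtain ⟨p, hp⟩ := h
  exact ⟨p.reverse, fun w hw => hp w ((Walk.mem_support_reverse p).mp hw)⟩

lemma step {e : E} (he : G.inc e = s(x, y)) (hx : x ∈ S) (hy : y ∈ S) :
    G.ReachableIn S x y := by
  refine ⟨.cons e he (.nil y), fun w hw => ?_⟩
  simp only [Walk.support, List.mem_cons] at hw
  rcases hw with rfl | rfl | h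
  exacts [hx, hy, absurd h List.not_mem_nil]

end ReachableIn

lemma compIn_subset : G.compIn S x ⊆ S := fun _ h => h.mem_right

lemma mem_compIn_self (hx : x ∈ S) : x ∈ G.compIn S x := ReachableIn.refl hx

lemma ConnectedOn.of_forall_reachableIn (hz : z ∈ S) (h : ∀ y ∈ S, G.ReachableIn S z y) :
    G.ConnectedOn S :=
  ⟨⟨z, hz⟩, fun x hx y hy => (h x hx).symm.trans (h y hy)⟩

lemma connectedOn_compIn (hz : z ∈ S) : G.ConnectedOn (G.compIn S z) := by
  refine .of_forall_reachableIn (mem_compIn_self hz) ?_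
  rintro y ⟨p, hp⟩
  refine ⟨p, fun w hw => ?_⟩
  obtain ⟨q, hq⟩ := p.exists_prefix hw
  exact ⟨q, fun a ha => hp a (hq a ha)⟩

lemma ConnectedOn.union (hS : G.ConnectedOn S) (hT : G.ConnectedOn T) (hxS : x ∈ S)
    (hxT : x ∈ T) : G.ConnectedOn (S ∪ T) := by
  refine .of_forall_reachableIn (.inl hxS) fun y hy => ?_
  rcases hy with hy | hy
  exacts [(hS.2 x hxS y hy).mono Set.subset_union_left,
    (hT.2 x hxT y hy).mono Set.subset_union_right]

lemma ConnectedOn.union_of_edge (hS : G.ConnectedOn S) (hT : G.ConnectedOn T) {e : E}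
    (he : G.inc e = s(x, y)) (hx : x ∈ S) (hy : y ∈ T) : G.ConnectedOn (S ∪ T) := by
  refine .of_forall_reachableIn (.inl hx) fun z hz => ?_
  rcases hz with hz | hz
  · exact (hS.2 x hx z hz).mono Set.subset_union_left
  · exact (ReachableIn.step he (.inl hx) (.inr hy)).trans
      ((hT.2 y hy z hz).mono Set.subset_union_right)

lemma ConnectedOn.subset_compIn (hT : G.ConnectedOn T) (hTS : T ⊆ S) (hyT : y ∈ T)
    (hy : y ∈ G.compIn S x) : T ⊆ G.compIn S x :=
  fun _ hw => hy.trans ((hT.2 y hyT _ hw).mono hTS)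

lemma ConnectedOn.exists_edge (hS : G.ConnectedOn S) (hx : x ∈ S ∩ T) (hy : y ∈ S \ T) :
    ∃ e a b, G.inc e = s(a, b) ∧ a ∈ S ∩ T ∧ b ∈ S \ T := by
  obtain ⟨p, hp⟩ := hS.2 x hx.1 y hy.1
  obtain ⟨e, a, b, hab, -, hb, haT, hbT⟩ := p.exists_step_exit (T := S ∩ T) hx fun h => hy.2 h.2
  exact ⟨e, a, b, hab, haT, hp b hb, fun h => hbT ⟨hp b hb, h⟩⟩

end Connectivity

section Delta

variable {X Y S : Set V}

lemma mem_delta_iff {e : E} {a b : V} (hab : G.inc e = s(a, b)) :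
    e ∈ G.delta S ↔ ¬ (a ∈ S ↔ b ∈ S) := by
  constructor
  · rintro ⟨x, y, hxy, hx, hy⟩
    rcases Sym2.eq_iff.mp (hab.symm.trans hxy) with ⟨rfl, rfl⟩ | ⟨rfl, rfl⟩ <;> tauto
  · intro h
    by_cases ha : a ∈ S
    · exact ⟨a, b, hab, ha, fun hb => h ⟨fun _ => hb, fun _ => ha⟩⟩
    · exact ⟨b, a, hab.trans Sym2.eq_swap, by tauto, ha⟩

lemma delta_compl : G.delta Sᶜ = G.delta S := by
  ext e
  induction h : G.inc e using Sym2.ind with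
  | h a b => simp only [mem_delta_iff h, Set.mem_compl_iff]; tauto

lemma delta_union_subset : G.delta (X ∪ Y) ⊆ G.delta X ∪ G.delta Y := by
  intro e he
  induction h : G.inc e using Sym2.ind with
  | h a b => simp only [Set.mem_union, mem_delta_iff h] at he ⊢; tauto

lemma delta_compIn_subset {t : V} : G.delta (G.compIn S t) ⊆ G.delta S := by
  rintro e ⟨a, b, hab, ha, hb⟩
  exact ⟨a, b, hab, ha.mem_right, fun hbS => hb (ha.trans (.step hab ha.mem_right hbS))⟩

variable [Finite E]

lemma ncard_delta_inter_add_ncard_delta_union_le :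
    (G.delta (X ∩ Y)).ncard + (G.delta (X ∪ Y)).ncard ≤
      (G.delta X).ncard + (G.delta Y).ncard := by
  refine Set.ncard_add_ncard_le_of_subset (fun e he => ?_) (fun e he => ?_) <;>
  induction h : G.inc e using Sym2.ind with
  | h a b => simp only [Set.mem_union, Set.mem_inter_iff, mem_delta_iff h] at he ⊢; tauto

lemma ncard_delta_sdiff_add_ncard_delta_sdiff_le :
    (G.delta (X \ Y)).ncard + (G.delta (Y \ X)).ncard ≤
      (G.delta X).ncard + (G.delta Y).ncard := by
  refine Set.ncard_add_ncard_le_of_subset (fun e he => ?_) (fun e he => ?_) <;>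
  induction h : G.inc e using Sym2.ind with
  | h a b =>
    simp only [Set.mem_union, Set.mem_inter_iff, Set.mem_sdiff, mem_delta_iff h] at he ⊢
    tauto

/-- An edge joining `X \ Y` to `Y \ X` lies in both cuts but not in the cut of the union. -/
lemma ncard_delta_union_add_two_le {g : E} {a b : V} (hg : G.inc g = s(a, b))
    (ha : a ∈ X \ Y) (hb : b ∈ Y \ X) :
    (G.delta (X ∪ Y)).ncard + 2 ≤ (G.delta X).ncard + (G.delta Y).ncard := by
  have hgX : g ∈ G.delta X := (mem_delta_iff hg).mpr fun h => hb.2 (h.mp ha.1)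
  have hgY : g ∈ G.delta Y := (mem_delta_iff hg).mpr fun h => ha.2 (h.mpr hb.1)
  have hgU : g ∉ G.delta (X ∪ Y) :=
    (mem_delta_iff hg).not_left.mpr ⟨fun _ => .inr hb.1, fun _ => .inl ha.1⟩
  have key := Set.ncard_add_ncard_le_of_subset (s := insert g (G.delta (X ∪ Y))) (t := {g})
    (u := G.delta X) (w := G.delta Y)
    (Set.union_subset (Set.insert_subset (.inl hgX) delta_union_subset)
      (Set.singleton_subset_iff.mpr (.inl hgX)))
    (Set.inter_subset_right.trans (Set.singleton_subset_iff.mpr ⟨hgX, hgY⟩))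
  rwa [Set.ncard_insert_of_notMem hgU, Set.ncard_singleton] at key

end Delta

lemma ThreePaths.three_le_ncard_delta [Finite E] {u v : V} {X : Set V} (h : G.ThreePaths u v)
    (hu : u ∈ X) (hv : v ∉ X) : 3 ≤ (G.delta X).ncard := by
  obtain ⟨p₁, p₂, p₃, -, -, -, h₁₂, h₁₃, h₂₃⟩ := h
  have crossing : ∀ p : G.Walk u v, ∃ e ∈ p.edges, e ∈ G.delta X := by
    intro p
    obtain ⟨e, a, b, hab, he, -, ha, hb⟩ := p.exists_step_exit hu hv
    exact ⟨e, he, a, b, hab, ha, hb⟩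
  obtain ⟨e₁, he₁, hδ₁⟩ := crossing p₁
  obtain ⟨e₂, he₂, hδ₂⟩ := crossing p₂
  obtain ⟨e₃, he₃, hδ₃⟩ := crossing p₃
  have hcard : ({e₁, e₂, e₃} : Set E).ncard = 3 := Set.ncard_eq_three.mpr
    ⟨e₁, e₂, e₃, fun h => h₁₂ e₁ he₁ (h ▸ he₂), fun h => h₁₃ e₁ he₁ (h ▸ he₃),
      fun h => h₂₃ e₂ he₂ (h ▸ he₃), rfl⟩
  rw [← hcard]
  exact Set.ncard_le_ncard (by simp [Set.insert_subset_iff, hδ₁, hδ₂, hδ₃])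

section Flow

open Finset
open scoped Classical

/-- `f e = some (a, b)` means that `e` is used as an arc from `a` to `b`. -/
def IsPartialOrientation (G : Multigraph V E) (f : E → Option (V × V)) : Prop :=
  ∀ e a b, f e = some (a, b) → G.inc e = s(a, b)

noncomputable def arcSign (x : V) : Option (V × V) → ℤ
  | none => 0
  | some (a, b) => (if x = a then 1 else 0) - (if x = b then 1 else 0)

/-- The step from `a` to `b` along `e` may carry one more unit of flow. -/
def Residual (f : E → Option (V × V)) (a b : V) (e : E) : Prop :=
  f e = none ∨ f e = some (b, a)

variable [Fintype E]

noncomputable def netOut (f : E → Option (V × V)) (x : V) : ℤ := ∑ e, arcSign x (f e)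

/-- A flow of value `k` from `u` to `v` in which every edge carries at most one unit. -/
def IsFlow (G : Multigraph V E) (f : E → Option (V × V)) (u v : V) (k : ℕ) : Prop :=
  G.IsPartialOrientation f ∧
    ∀ x, netOut f x = (if x = u then (k : ℤ) else 0) - (if x = v then (k : ℤ) else 0)

noncomputable def arcsOut (f : E → Option (V × V)) (S : Set V) : Finset E :=
  univ.filter fun e => ∃ a b, f e = some (a, b) ∧ a ∈ S ∧ b ∉ S

variable {f : E → Option (V × V)} {u v : V} {k : ℕ}

lemma sum_netOut_eq_card_sub_card (s : Finset V) :
    ∑ x ∈ s, netOut f x = (arcsOut f s).card - (arcsOut f (↑s)ᶜ).card := by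
  simp only [netOut, arcsOut, card_filter]
  push_cast
  rw [sum_comm, ← sum_sub_distrib]
  refine sum_congr rfl fun e _ => ?_
  rcases f e with _ | ⟨a, b⟩
  · simp [arcSign]
  · simp only [arcSign, sum_sub_distrib, sum_ite_eq', Option.some.injEq, Prod.mk.injEq,
      Finset.mem_coe, Set.mem_compl_iff, not_not]
    split_ifs <;> simp_all

lemma IsFlow.sum_netOut (hf : G.IsFlow f u v k) (s : Finset V) :
    ∑ x ∈ s, netOut f x = (if u ∈ s then (k : ℤ) else 0) - (if v ∈ s then (k : ℤ) else 0) := by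
  simp only [hf.2, sum_sub_distrib, sum_ite_eq']

lemma netOut_eq_of_eqOn_ne {f' : E → Option (V × V)} {e : E} (h : ∀ e' ≠ e, f' e' = f e')
    (x : V) : netOut f' x = netOut f x - arcSign x (f e) + arcSign x (f' e) := by
  have key := sum_eq_single (s := univ) (f := fun e' => arcSign x (f' e') - arcSign x (f e')) e
    (fun e' _ he' => by simp [h e' he']) (by simp)
  simp only [sum_sub_distrib] at key
  simp only [netOut]
  linarith

lemma exists_augment {a b : V} (p : G.Walk a b) (hf : G.IsPartialOrientation f)
    (hp : p.AllSteps (Residual f)) (hnd : p.edges.Nodup) :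
    ∃ f', G.IsPartialOrientation f' ∧ (∀ e ∉ p.edges, f' e = f e) ∧
      (∀ e ∈ p.edges, (f' e).isSome = !(f e).isSome) ∧
      ∀ x, netOut f' x = netOut f x + (if x = a then 1 else 0) - (if x = b then 1 else 0) := by
  induction p generalizing f with
  | nil a => exact ⟨f, hf, fun _ _ => rfl, fun _ h => absurd h List.not_mem_nil, fun x => by ring⟩
  | @cons a c b e he p ih =>
    obtain ⟨heP, hnd⟩ := List.nodup_cons.mp hnd
    obtain ⟨f₁, hf₁e, hf₁ne⟩ : ∃ f₁ : E → Option (V × V),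
        f₁ e = (if f e = none then some (a, c) else none) ∧ ∀ e' ≠ e, f₁ e' = f e' :=
      ⟨Function.update f e _, Function.update_self .., fun _ h => Function.update_of_ne h ..⟩
    have hf₁ : G.IsPartialOrientation f₁ := by
      intro e' a' b' h
      by_cases he' : e' = e
      · subst he'
        by_cases hnone : f e' = none <;> simp_all
      · exact hf e' a' b' (by rwa [hf₁ne e' he'] at h)
    have hagree : ∀ e' ∈ p.edges, f₁ e' = f e' :=
      fun e' h => hf₁ne e' (by rintro rfl; exact heP h)
    have hp₁ : p.AllSteps (Residual f₁) :=
      hp.2.mono fun a b e' h hr => by rwa [Residual, hagree e' h]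
    obtain ⟨f', hf', hoff, htoggle, hnet⟩ := ih hf₁ hp₁ hnd
    refine ⟨f', hf', fun e' he' => ?_, fun e' he' => ?_, fun x => ?_⟩
    · rw [hoff e' (fun h => he' (List.mem_cons_of_mem _ h)),
        hf₁ne e' (by rintro rfl; exact he' List.mem_cons_self)]
    · rcases List.mem_cons.mp he' with rfl | he'
      · rw [hoff _ heP, hf₁e]
        rcases hp.1 with h | h <;> simp [h]
      · rw [htoggle e' he', hagree e' he']
    · rw [hnet x, netOut_eq_of_eqOn_ne hf₁ne, hf₁e]
      rcases hp.1 with h | h <;> simp only [h, arcSign] <;> simp <;> ring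

/-- Every edge leaving a residually closed set is an arc leaving it, and none enters it. -/
lemma IsFlow.ncard_delta_le [Finite V] (hf : G.IsFlow f u v k) {X : Set V} (hu : u ∈ X)
    (hv : v ∉ X) (hclosed : ∀ e a b, G.inc e = s(a, b) → a ∈ X → Residual f a b e → b ∈ X) :
    (G.delta X).ncard ≤ k := by
  have hout : G.delta X ⊆ ↑(arcsOut f (Set.toFinite X).toFinset) := by
    rintro e ⟨a, b, hab, ha, hb⟩
    have harc : f e = some (a, b) := by
      rcases hfe : f e with _ | ⟨c, d⟩
      · exact absurd (hclosed e a b hab ha (.inl hfe)) hb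
      · rcases Sym2.eq_iff.mp ((hf.1 e c d hfe).symm.trans hab) with ⟨rfl, rfl⟩ | ⟨rfl, rfl⟩
        · rfl
        · exact absurd (hclosed e _ _ hab ha (.inr hfe)) hb
    simp [arcsOut, harc, ha, hb]
  have hin : arcsOut f (↑(Set.toFinite X).toFinset)ᶜ = ∅ := by
    ext e
    simp only [arcsOut, Set.Finite.coe_toFinset, Set.mem_compl_iff, not_not, mem_filter,
      mem_univ, true_and, notMem_empty, iff_false, not_exists, not_and]
    exact fun a b hfe ha hb =>
      ha (hclosed e b a ((hf.1 e a b hfe).trans Sym2.eq_swap) hb (.inr hfe))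
  have hsum := hf.sum_netOut (Set.toFinite X).toFinset
  rw [sum_netOut_eq_card_sub_card, hin] at hsum
  have hcard := Set.ncard_le_ncard hout
  simp only [Set.ncard_coe_finset, Set.Finite.coe_toFinset] at hcard
  simp [hu, hv] at hsum
  omega

lemma IsFlow.mem_of_arcClosed [Finite V] (hf : G.IsFlow f u v (k + 1)) {X : Set V}
    (hu : u ∈ X) (hclosed : ∀ e a b, f e = some (a, b) → a ∈ X → b ∈ X) : v ∈ X := by
  by_contra hv
  have hout : arcsOut f (Set.toFinite X).toFinset = ∅ := by
    ext e
    simp only [arcsOut, Set.Finite.coe_toFinset, mem_filter, mem_univ, true_and, notMem_empty,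
      iff_false, not_exists, not_and]
    exact fun a b hfe ha hb => hb (hclosed e a b hfe ha)
  have hsum := hf.sum_netOut (Set.toFinite X).toFinset
  rw [sum_netOut_eq_card_sub_card, hout] at hsum
  simp [hu, hv] at hsum
  omega

lemma IsFlow.exists_succ [Finite V] (hf : G.IsFlow f u v k)
    (hcut : ∀ X : Set V, u ∈ X → v ∉ X → k + 1 ≤ (G.delta X).ncard) :
    ∃ f', G.IsFlow f' u v (k + 1) := by
  set X : Set V := {y | ∃ p : G.Walk u y, p.AllSteps (Residual f)}
  have hvX : v ∈ X := by
    by_contra hvX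
    have := hf.ncard_delta_le (X := X) ⟨.nil u, trivial⟩ hvX
      fun e a b hab ⟨_, hp⟩ hr => hp.snoc hab hr
    have := hcut X ⟨.nil u, trivial⟩ hvX
    omega
  obtain ⟨p, hp⟩ := hvX
  obtain ⟨q, hq, hqr, -⟩ := p.exists_isPath hp
  obtain ⟨f', hf', -, -, hnet⟩ := exists_augment q hf.1 hqr hq.edges_nodup
  exact ⟨f', hf', fun x => by rw [hnet, hf.2]; push_cast; split_ifs <;> ring⟩

lemma IsFlow.exists_path [Finite V] (hf : G.IsFlow f u v (k + 1)) :
    ∃ p : G.Walk u v, p.IsPath ∧ p.AllSteps fun a b e => f e = some (a, b) := by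
  obtain ⟨p, hp⟩ := hf.mem_of_arcClosed (X := {y | ∃ p : G.Walk u y,
    p.AllSteps fun a b e => f e = some (a, b)}) ⟨.nil u, trivial⟩
    fun e a b hfe ⟨_, hp⟩ => hp.snoc (hf.1 e a b hfe) hfe
  obtain ⟨q, hq, hqf, -⟩ := p.exists_isPath hp
  exact ⟨q, hq, hqf⟩

lemma IsFlow.exists_paths [Finite V] (hf : G.IsFlow f u v k) :
    ∃ L : List (G.Walk u v), L.length = k ∧ (∀ p ∈ L, p.IsPath ∧ ∀ e ∈ p.edges, f e ≠ none) ∧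
      L.Pairwise EdgeDisjoint := by
  induction k generalizing f with
  | zero => exact ⟨[], rfl, by simp, .nil⟩
  | succ k ih =>
    obtain ⟨p, hp, hpf⟩ := hf.exists_path
    have hrev : p.reverse.AllSteps (Residual f) := hpf.reverse.mono fun _ _ _ _ h => .inr h
    obtain ⟨f', hf', hoff, htoggle, hnet⟩ :=
      exists_augment p.reverse hf.1 hrev (by simpa using hp.edges_nodup)
    have hused : ∀ e ∈ p.edges, f e ≠ none := fun e he => by
      obtain ⟨a, b, h⟩ := hpf.exists_of_mem_edges he
      simp [h]
    have hfreed : ∀ e ∈ p.edges, f' e = none := fun e he => by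
      obtain ⟨a, b, h⟩ := hpf.exists_of_mem_edges he
      simpa [h] using htoggle e (by simpa using he)
    have hkept : ∀ e, f' e ≠ none → e ∉ p.edges ∧ f e ≠ none := fun e he =>
      have hnot : e ∉ p.edges := fun h => he (hfreed e h)
      ⟨hnot, hoff e (by simpa using hnot) ▸ he⟩
    obtain ⟨L, hlen, hL, hdisj⟩ :=
      ih ⟨hf', fun x => by rw [hnet, hf.2]; push_cast; split_ifs <;> ring⟩
    refine ⟨p :: L, by simp [hlen], ?_, List.pairwise_cons.mpr ⟨?_, hdisj⟩⟩
    · simp only [List.mem_cons, forall_eq_or_imp]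
      exact ⟨⟨hp, hused⟩, fun q hq => ⟨(hL q hq).1, fun e he => (hkept e ((hL q hq).2 e he)).2⟩⟩
    · exact fun q hq e hep heq => (hkept e ((hL q hq).2 e heq)).1 hep

lemma exists_isFlow [Finite V] (hcut : ∀ X : Set V, u ∈ X → v ∉ X → k ≤ (G.delta X).ncard) :
    ∃ f, G.IsFlow f u v k := by
  induction k with
  | zero => exact ⟨fun _ => none, fun _ _ _ h => by simp at h, fun x => by simp [netOut, arcSign]⟩
  | succ k ih =>
    obtain ⟨f, hf⟩ := ih fun X hu hv => (Nat.le_succ k).trans (hcut X hu hv)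
    exact hf.exists_succ hcut

end Flow

/-- Menger's theorem for edge-disjoint paths. -/
theorem exists_pairwise_edgeDisjoint_paths [Finite V] [Finite E] {u v : V} {k : ℕ}
    (hcut : ∀ X : Set V, u ∈ X → v ∉ X → k ≤ (G.delta X).ncard) :
    ∃ L : List (G.Walk u v), L.length = k ∧ (∀ p ∈ L, p.IsPath) ∧ L.Pairwise EdgeDisjoint := by
  have := Fintype.ofFinite E
  obtain ⟨f, hf⟩ := exists_isFlow hcut
  obtain ⟨L, hlen, hL, hdisj⟩ := hf.exists_paths
  exact ⟨L, hlen, fun p hp => (hL p hp).1, hdisj⟩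

lemma threePaths_of_forall_three_le_ncard_delta [Finite V] [Finite E] {u v : V}
    (hcut : ∀ X : Set V, u ∈ X → v ∉ X → 3 ≤ (G.delta X).ncard) : G.ThreePaths u v := by
  obtain ⟨L, hlen, hL, hdisj⟩ := exists_pairwise_edgeDisjoint_paths hcut
  match L, hlen with
  | [p₁, p₂, p₃], _ =>
    simp only [List.pairwise_cons, List.mem_cons, List.not_mem_nil, forall_eq_or_imp,
      List.Pairwise.nil] at hdisj
    simp only [List.mem_cons, List.not_mem_nil, forall_eq_or_imp] at hL
    exact ⟨p₁, p₂, p₃, hL.1, hL.2.1, hL.2.2.1, hdisj.1.1, hdisj.1.2.1, hdisj.2.1.1⟩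

section Fence

def IsFenceIn (G : Multigraph V E) (Z X : Set V) : Prop :=
  X ⊆ Z ∧ G.ConnectedOn X ∧ (G.delta X).ncard ≤ 2

variable [Finite E] {Z X Y : Set V}

lemma exists_isFenceIn_sdiff (hX : Maximal (G.IsFenceIn Z) X) (hY : G.IsFenceIn Z Y) {w : V}
    (hwY : w ∈ Y) (hwX : w ∉ X) : ∃ Y', w ∈ Y' ∧ G.IsFenceIn (Z \ X) Y' := by
  by_cases hsmall : (G.delta (Y \ X)).ncard ≤ 2
  · exact ⟨G.compIn (Y \ X) w, mem_compIn_self ⟨hwY, hwX⟩,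
      compIn_subset.trans (Set.sdiff_subset_sdiff_left hY.1), connectedOn_compIn ⟨hwY, hwX⟩,
      (Set.ncard_le_ncard delta_compIn_subset).trans hsmall⟩
  exfalso
  obtain ⟨s, hsX, hsY⟩ : (X ∩ Y).Nonempty := by
    by_contra h
    have hYX : Y \ X = Y :=
      sdiff_eq_left.mpr (Set.disjoint_left.mpr fun y hyY hyX => h ⟨y, hyX, hyY⟩)
    rw [hYX] at hsmall
    exact hsmall hY.2.2
  have hunion : 3 ≤ (G.delta (X ∪ Y)).ncard := by
    by_contra h
    have hXY : X ∪ Y ⊆ X := hX.2 ⟨Set.union_subset hX.1.1 hY.1,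
      hX.1.2.1.union hY.2.1 hsX hsY, by omega⟩ Set.subset_union_left
    exact hwX (hXY (.inr hwY))
  obtain ⟨t, htX, htY⟩ : (X \ Y).Nonempty := by
    by_contra h
    rw [Set.not_nonempty_iff_eq_empty, Set.sdiff_eq_empty] at h
    rw [Set.union_eq_right.mpr h] at hunion
    exact absurd hY.2.2 (by omega)
  obtain ⟨g, a, b, hg, ha, hb⟩ := hX.1.2.1.exists_edge ⟨hsX, hsY⟩ ⟨htX, htY⟩
  have hsplit := ncard_delta_union_add_two_le (X := X ∩ Y) (Y := X \ Y) hg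
    ⟨ha, fun h => h.2 ha.2⟩ ⟨hb, fun h => hb.2 h.2⟩
  rw [Set.inter_union_sdiff] at hsplit
  have hsub := ncard_delta_inter_add_ncard_delta_union_le (G := G) (X := X) (Y := Y)
  have hposi := ncard_delta_sdiff_add_ncard_delta_sdiff_le (G := G) (X := X) (Y := Y)
  have := hX.1.2.2
  have := hY.2.2
  omega

/-- Removing a maximal fence `X` from `Z`, the component of `Z \ X` at a vertex `t` is
again a connected set in which every vertex is fenced, yet has a large cut. -/
theorem ncard_delta_le_two_of_forall_isFenceIn [Finite V] (hZ : G.ConnectedOn Z)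
    (hfence : ∀ w ∈ Z, ∃ X, w ∈ X ∧ G.IsFenceIn Z X) : (G.delta Z).ncard ≤ 2 := by
  induction Z using WellFoundedLT.induction with
  | _ Z ih =>
  obtain ⟨w₀, hw₀⟩ := hZ.1
  obtain ⟨X₀, -, hX₀⟩ := hfence w₀ hw₀
  obtain ⟨X, -, hX⟩ := Finite.exists_le_maximal hX₀
  by_cases hZX : Z ⊆ X
  · rw [← Set.Subset.antisymm hX.1.1 hZX]
    exact hX.1.2.2
  exfalso
  obtain ⟨t, htZ, htX⟩ := Set.not_subset.mp hZX
  set C := G.compIn (Z \ X) t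
  have htC : t ∈ C := mem_compIn_self ⟨htZ, htX⟩
  have hCZ : C ⊆ Z \ X := compIn_subset
  have hCbig : ¬ (G.delta C).ncard ≤ 2 := by
    intro hC
    obtain ⟨x, hx⟩ := hX.1.2.1.1
    obtain ⟨g, a, b, hg, ha, hb⟩ :=
      hZ.exists_edge (T := C) ⟨htZ, htC⟩ ⟨hX.1.1 hx, fun h => (hCZ h).2 hx⟩
    have hbX : b ∈ X := by
      by_contra hbX
      exact hb.2 (ha.2.trans (.step hg (hCZ ha.2) ⟨hb.1, hbX⟩))
    have hcount := ncard_delta_union_add_two_le (X := X) (Y := C) (hg.trans Sym2.eq_swap)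
      ⟨hbX, fun h => (hCZ h).2 hbX⟩ ⟨ha.2, (hCZ ha.2).2⟩
    have hXC : X ∪ C ⊆ X := hX.2 ⟨Set.union_subset hX.1.1 (hCZ.trans Set.sdiff_subset),
      hX.1.2.1.union_of_edge (connectedOn_compIn ⟨htZ, htX⟩) (hg.trans Sym2.eq_swap) hbX ha.2,
      by have := hX.1.2.2; omega⟩ Set.subset_union_left
    exact htX (hXC (.inr htC))
  have hCZ' : C ⊂ Z := by
    obtain ⟨x, hx⟩ := hX.1.2.1.1
    exact ssubset_of_subset_not_superset (hCZ.trans Set.sdiff_subset)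
      fun h => (hCZ (h (hX.1.1 hx))).2 hx
  refine hCbig (ih C hCZ' (connectedOn_compIn ⟨htZ, htX⟩) fun w hwC => ?_)
  obtain ⟨Y, hwY, hY⟩ := hfence w (hCZ hwC).1
  obtain ⟨Y', hwY', hY'⟩ := exists_isFenceIn_sdiff hX hY hwY (hCZ hwC).2
  exact ⟨Y', hwY', hY'.2.1.subset_compIn hY'.1 hwY' hwC, hY'.2⟩

end Fence

lemma threePaths_of_forall_not_isFenceIn [Finite V] [Finite E] {A : Set V} {v z w : V}
    (hA : ∀ a ∈ A, G.ThreeEC v a) (hw : w ∈ G.compIn Aᶜ z)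
    (hunfenced : ∀ X, w ∈ X → ¬ G.IsFenceIn (G.compIn Aᶜ z) X) : G.ThreePaths v w := by
  refine threePaths_of_forall_three_le_ncard_delta fun X hvX hwX => ?_
  by_contra! hX
  have hXA : Xᶜ ⊆ Aᶜ := fun a haX haA => (hA a haA).elim (fun h => haX (h ▸ hvX))
    fun h => absurd (h.three_le_ncard_delta hvX haX) (by omega)
  refine hunfenced (G.compIn Xᶜ w) (mem_compIn_self hwX) ⟨?_, connectedOn_compIn hwX, ?_⟩
  · exact (connectedOn_compIn hwX).subset_compIn (compIn_subset.trans hXA)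
      (mem_compIn_self hwX) hw
  · exact (Set.ncard_le_ncard (delta_compIn_subset.trans delta_compl.subset)).trans
      (Nat.le_of_lt_succ hX)

end Multigraph

theorem component_attached_le_two_general {V E : Type} [Finite V] [Finite E]
    (G : Multigraph V E) (A : Set V)
    (hA : ∃ v : V, A = {w | ThreeEC G v w}) (z : V) (hz : z ∉ A) :
    {e : E | ∃ x y : V, G.inc e = s(x, y) ∧ x ∈ A ∧ y ∉ A ∧
      ∃ p : G.Walk z y, ∀ w ∈ p.support, w ∉ A}.ncard ≤ 2 := by
  obtain ⟨v, hAv⟩ := hA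
  have hcrossing : {e : E | ∃ x y : V, G.inc e = s(x, y) ∧ x ∈ A ∧ y ∉ A ∧
      ∃ p : G.Walk z y, ∀ w ∈ p.support, w ∉ A} ⊆ G.delta (G.compIn Aᶜ z) := by
    rintro e ⟨x, y, hxy, hx, -, hy⟩
    exact ⟨y, x, hxy.trans Sym2.eq_swap, hy, fun h => h.mem_right hx⟩
  by_contra! h3
  obtain ⟨w, hwZ, hw⟩ : ∃ w ∈ G.compIn Aᶜ z, ∀ X, w ∈ X → ¬ G.IsFenceIn (G.compIn Aᶜ z) X := by
    by_contra! h
    have := ncard_delta_le_two_of_forall_isFenceIn (connectedOn_compIn hz) h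
    have := Set.ncard_le_ncard hcrossing
    omega
  subst hAv
  exact hwZ.mem_right (.inr (threePaths_of_forall_not_isFenceIn (fun _ h => h) hwZ hw))

/-- if A is a 3-edge-connected component of G, every connected
component of G - A (here, the component of a vertex z ∉ A) has at most two edges
of G joining it to A. -/
theorem component_attached_le_two {V E : Type} [Finite V] [Finite E]
    (G : Multigraph V E) (hG : G.Loopless) (A : Set V)
    (hA : ∃ v : V, A = {w | ThreeEC G v w}) (z : V) (hz : z ∉ A) :
    {e : E | ∃ x y : V, G.inc e = s(x, y) ∧ x ∈ A ∧ y ∉ A ∧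
      ∃ p : G.Walk z y, ∀ w ∈ p.support, w ∉ A}.ncard ≤ 2 :=
  component_attached_le_two_general G A hA z hz

end TCW
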